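/- Every rooted internal monotone connected node-clearing search S of a graph G with N nodes generates a nested sequence of trees T_0 ⊆ T_1 ⊆ ... ⊆ T_N where T_0 is empty, T_N is a spanning tree of G, and for each n the tree T_n is obtained from T_{n-1} by adding exactly one new node u_n and (for n ≥ 2) exactly one edge connecting u_n to a node of T_{n-1}. -/

import Mathlib

open SimpleGraph

/-- A move in a graph-search game: place a searcher, remove a searcher,
or slide a searcher along an edge. -/
inductive GMove (V : Type*) where
  | place (v : V)
  | remove (v : V)
  | slide (u v : V)

namespace GMove

/-- The node (if any) entered by the move. -/
def target {V : Type*} : GMove V → Option V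
  | place v => some v
  | remove _ => none
  | slide _ v => some v

/-- The edge (if any) traversed by the move. -/
def traversed {V : Type*} : GMove V → Option (Sym2 V)
  | slide u v => some s(u, v)
  | _ => none

end GMove

variable {V : Type*}

open Classical in
/-- Number of searchers located at each node after `t` moves
(the move between time `t` and `t+1` is `S t`). -/
noncomputable def occ (S : ℕ → GMove V) : ℕ → V → ℕ
  | 0 => fun _ => 0
  | t + 1 => fun x =>
    match S t with
    | .place v => if x = v then occ S t x + 1 else occ S t x
    | .remove v => if x = v then occ S t x - 1 else occ S t x
    | .slide u v =>
        if x = v then occ S t x + 1 else if x = u then occ S t x - 1 else occ S t x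

/-- Number of searchers inside the graph after `t` moves. -/
def sn (S : ℕ → GMove V) : ℕ → ℕ
  | 0 => 0
  | t + 1 =>
    match S t with
    | .place _ => sn S t + 1
    | .remove _ => sn S t - 1
    | .slide _ _ => sn S t

/-- A legal search schedule on `G`: slides go along edges starting from an occupied
node, and removals take place at occupied nodes. -/
def Legal (G : SimpleGraph V) (S : ℕ → GMove V) : Prop :=
  ∀ t, match S t with
    | .place _ => True
    | .remove v => 0 < occ S t v
    | .slide u v => G.Adj u v ∧ 0 < occ S t u

/-- An internal schedule never removes searchers from the graph. -/
def Internal (S : ℕ → GMove V) : Prop := ∀ t v, S t ≠ GMove.remove v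

/-- A rooted schedule places searchers only at the root `r`. -/
def RootedAt (S : ℕ → GMove V) (r : V) : Prop := ∀ t v, S t = GMove.place v → v = r

/-- The set of n-dirty nodes of the node game: initially all nodes are n-dirty;
after a move, a node is n-dirty iff it is joined to a previously n-dirty node by a
path all of whose nodes are unguarded. -/
def ndirty (G : SimpleGraph V) (S : ℕ → GMove V) : ℕ → Set V
  | 0 => Set.univ
  | t + 1 =>
    { u | ∃ w, w ∈ ndirty G S t ∧ ∃ p : G.Walk u w, ∀ x ∈ p.support, occ S (t + 1) x = 0 }

/-- The set of n-dirty edges: edges incident to an n-dirty node. -/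
def nEdgeDirty (G : SimpleGraph V) (S : ℕ → GMove V) (t : ℕ) : Set (Sym2 V) :=
  { e | e ∈ G.edgeSet ∧ ∃ v ∈ e, v ∈ ndirty G S t }

/-- The set of e-dirty edges of the edge game: initially all edges are e-dirty;
a traversed edge is cleared, and an edge is recontaminated when joined to a
(still) e-dirty edge by a path whose interior nodes are unguarded. -/
def edirty (G : SimpleGraph V) (S : ℕ → GMove V) : ℕ → Set (Sym2 V)
  | 0 => G.edgeSet
  | t + 1 =>
    (edirty G S t \ { e | (S t).traversed = some e }) ∪
      { e | ∃ x y q q', e = s(x, y) ∧ G.Adj x y ∧ G.Adj q q' ∧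
          (s(q, q') ∈ edirty G S t ∧ (S t).traversed ≠ some s(q, q')) ∧
          ∃ p : G.Walk y q, ∀ z ∈ p.support, occ S (t + 1) z = 0 }

/-- A node is e-dirty iff it is unguarded and adjacent to an e-dirty edge. -/
def edirtyNode (G : SimpleGraph V) (S : ℕ → GMove V) (t : ℕ) : Set V :=
  { v | occ S t v = 0 ∧ ∃ e ∈ edirty G S t, v ∈ e }

/-- The set of m-dirty edges of the mixed edge game: as in the edge game, but in
addition an edge both of whose endpoints are guarded becomes m-clear. -/
def mdirty (G : SimpleGraph V) (S : ℕ → GMove V) : ℕ → Set (Sym2 V)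
  | 0 => G.edgeSet
  | t + 1 =>
    (mdirty G S t \
        ({ e | (S t).traversed = some e } ∪ { e | ∀ v ∈ e, 0 < occ S (t + 1) v })) ∪
      { e | ∃ x y q q', e = s(x, y) ∧ G.Adj x y ∧ G.Adj q q' ∧
          (s(q, q') ∈ mdirty G S t ∧ (S t).traversed ≠ some s(q, q') ∧
            ¬ (∀ v ∈ (s(q, q') : Sym2 V), 0 < occ S (t + 1) v)) ∧
          ∃ p : G.Walk y q, ∀ z ∈ p.support, occ S (t + 1) z = 0 }

/-- A node is m-dirty iff it is unguarded and adjacent to an m-dirty edge. -/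
def mdirtyNode (G : SimpleGraph V) (S : ℕ → GMove V) (t : ℕ) : Set V :=
  { v | occ S t v = 0 ∧ ∃ e ∈ mdirty G S t, v ∈ e }

/-- The n-clear subgraph: n-clear nodes and all edges of `G` between them. -/
def nclearSubgraph (G : SimpleGraph V) (S : ℕ → GMove V) (t : ℕ) : G.Subgraph where
  verts := (ndirty G S t)ᶜ
  Adj a b := G.Adj a b ∧ a ∉ ndirty G S t ∧ b ∉ ndirty G S t
  adj_sub h := h.1
  edge_vert h := h.2.1
  symm := ⟨fun a b h => ⟨h.1.symm, h.2.2, h.2.1⟩⟩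

/-- The e-clear subgraph: e-clear nodes and e-clear edges. -/
def eclearSubgraph (G : SimpleGraph V) (S : ℕ → GMove V) (t : ℕ) : G.Subgraph where
  verts := { v | v ∉ edirtyNode G S t } ∪ { v | ∃ e ∈ G.edgeSet \ edirty G S t, v ∈ e }
  Adj a b := G.Adj a b ∧ s(a, b) ∈ G.edgeSet \ edirty G S t
  adj_sub h := h.1
  edge_vert {a b} h := Or.inr ⟨s(a, b), h.2, Sym2.mem_mk_left a b⟩
  symm := ⟨fun a b h => ⟨h.1.symm, by rw [Sym2.eq_swap]; exact h.2⟩⟩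

/-!
Each move enters at most one node, so at most one node becomes n-clear per move. Together with
monotonicity, the n-clear sets form a chain that grows by at most one node per move, and the
first times `τ n` at which exactly `n` nodes are n-clear give a chain growing by exactly one node
`u n` at each step. As the n-clear subgraph is connected, for `n ≥ 2` the node `u n` has a
neighbour `w n` cleared before it; attaching `u n` to `T (n-1)` along the edge `u n w n` adds a
leaf, which keeps `T n` a tree.
-/

namespace SimpleGraph

variable {G : SimpleGraph V}

namespace Subgraph

lemma not_reachable_spanningCoe_of_notMem_verts {H : G.Subgraph} {u w : V}
    (hu : u ∉ H.verts) (huw : u ≠ w) : ¬ H.spanningCoe.Reachable u w := by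
  rintro ⟨p⟩
  exact hu (H.edge_vert (p.adj_snd (Walk.not_nil_of_ne huw)))

lemma Connected.sup_subgraphOfAdj {H : G.Subgraph} (hH : H.Connected) {u w : V}
    (huw : G.Adj u w) (hw : w ∈ H.verts) : (H ⊔ G.subgraphOfAdj huw).Connected :=
  connected_sup hH.preconnected (subgraphOfAdj_connected huw).preconnected ⟨w, hw, by simp⟩

lemma isAcyclic_spanningCoe_sup_subgraphOfAdj {H : G.Subgraph} (hH : H.spanningCoe.IsAcyclic)
    {u w : V} (huw : G.Adj u w) (hu : u ∉ H.verts) :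
    (H ⊔ G.subgraphOfAdj huw).spanningCoe.IsAcyclic := by
  rw [sup_spanningCoe, spanningCoe_subgraphOfAdj]
  exact hH.sup_edge_of_not_reachable (not_reachable_spanningCoe_of_notMem_verts hu huw.ne)

lemma Connected.exists_adj_of_verts_eq_insert {H : G.Subgraph} (hH : H.Connected) {u : V}
    {s : Set V} (hverts : H.verts = insert u s) (hu : u ∉ s) (hs : s.Nonempty) :
    ∃ w ∈ s, H.Adj u w := by
  obtain ⟨y, hy⟩ := hs
  have hu' : u ∈ H.verts := hverts ▸ Set.mem_insert u s
  have hy' : y ∈ H.verts := hverts ▸ Set.mem_insert_of_mem u hy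
  have huy : u ≠ y := fun h => hu (h ▸ hy)
  obtain ⟨p⟩ := hH.preconnected ⟨u, hu'⟩ ⟨y, hy'⟩
  have hadj := p.adj_snd (Walk.not_nil_of_ne (by simpa using huy))
  have hw : (p.snd : V) ∈ insert u s := hverts ▸ p.snd.2
  exact ⟨p.snd, hw.resolve_left fun h => hadj.ne (Subtype.ext h.symm), hadj⟩

end Subgraph

/-- Inducing on `{u n, w n}` yields the edge `s(u n, w n)` once the two are adjacent
(`leafChain_add_two`), which keeps adjacency proofs out of the definition. -/
noncomputable def leafChain (G : SimpleGraph V) (u w : ℕ → V) : ℕ → G.Subgraph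
  | 0 => ⊥
  | 1 => G.singletonSubgraph (u 1)
  | n + 2 => leafChain G u w (n + 1) ⊔ (⊤ : G.Subgraph).induce {u (n + 2), w (n + 2)}

structure IsLeafOrder (G : SimpleGraph V) (N : ℕ) (D : ℕ → Set V) (u w : ℕ → V) : Prop where
  zero : D 0 = ∅
  notMem : ∀ n, 1 ≤ n → n ≤ N → u n ∉ D (n - 1)
  eq_insert : ∀ n, 1 ≤ n → n ≤ N → D n = insert (u n) (D (n - 1))
  mem : ∀ n, 2 ≤ n → n ≤ N → w n ∈ D (n - 1)
  adj : ∀ n, 2 ≤ n → n ≤ N → G.Adj (u n) (w n)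

variable {N : ℕ} {D : ℕ → Set V} {u w : ℕ → V}

lemma leafChain_add_two {n : ℕ} (h : G.Adj (u (n + 2)) (w (n + 2))) :
    leafChain G u w (n + 2) = leafChain G u w (n + 1) ⊔ G.subgraphOfAdj h := by
  rw [leafChain, Subgraph.subgraphOfAdj_eq_induce]

lemma leafChain_sub_one_le : ∀ n, leafChain G u w (n - 1) ≤ leafChain G u w n
  | 0 => le_rfl
  | 1 => bot_le
  | _ + 2 => le_sup_left

lemma isAcyclic_spanningCoe_singletonSubgraph (v : V) :
    (G.singletonSubgraph v).spanningCoe.IsAcyclic :=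
  isAcyclic_bot.anti fun _ _ h => h

namespace IsLeafOrder

lemma verts_leafChain (h : IsLeafOrder G N D u w) : ∀ n ≤ N, (leafChain G u w n).verts = D n
  | 0, _ => h.zero.symm
  | 1, hN => by simp [leafChain, h.eq_insert 1 le_rfl hN, h.zero]
  | n + 2, hN => by
    have hw : w (n + 2) ∈ D (n + 1) := h.mem (n + 2) le_add_self hN
    rw [leafChain, Subgraph.verts_sup, Subgraph.induce_verts, h.verts_leafChain (n + 1) (by omega),
      h.eq_insert (n + 2) (by omega) hN, Set.union_insert,
      Set.union_singleton, Set.insert_eq_of_mem hw]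
    rfl

lemma connected_and_isAcyclic_spanningCoe_leafChain (h : IsLeafOrder G N D u w) :
    ∀ n, 1 ≤ n → n ≤ N →
      (leafChain G u w n).Connected ∧ (leafChain G u w n).spanningCoe.IsAcyclic
  | 1, _, _ => ⟨Subgraph.singletonSubgraph_connected, isAcyclic_spanningCoe_singletonSubgraph _⟩
  | n + 2, _, hN => by
    obtain ⟨hconn, hacyc⟩ := h.connected_and_isAcyclic_spanningCoe_leafChain (n + 1) (by omega) (by omega)
    have hadj := h.adj (n + 2) le_add_self hN
    have hverts := h.verts_leafChain (n + 1) (by omega)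
    rw [leafChain_add_two hadj]
    exact ⟨hconn.sup_subgraphOfAdj hadj (hverts ▸ h.mem (n + 2) le_add_self hN),
      Subgraph.isAcyclic_spanningCoe_sup_subgraphOfAdj hacyc hadj
        (hverts ▸ h.notMem (n + 2) (by omega) hN)⟩

lemma isTree_leafChain (h : IsLeafOrder G N D u w) {n : ℕ} (h1 : 1 ≤ n) (hn : n ≤ N) :
    (leafChain G u w n).coe.IsTree :=
  let ⟨hconn, hacyc⟩ := h.connected_and_isAcyclic_spanningCoe_leafChain n h1 hn
  ⟨hconn.coe, hacyc.embedding (Subgraph.coeEmbeddingSpanningCoe _)⟩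

lemma edgeSet_leafChain (h : IsLeafOrder G N D u w) {n : ℕ} (h2 : 2 ≤ n) (hn : n ≤ N) :
    (leafChain G u w n).edgeSet = insert s(u n, w n) (leafChain G u w (n - 1)).edgeSet := by
  obtain ⟨m, rfl⟩ := Nat.exists_eq_add_of_le' h2
  rw [leafChain_add_two (h.adj _ h2 hn), Subgraph.edgeSet_sup, edgeSet_subgraphOfAdj,
    Set.union_singleton]
  rfl

end IsLeafOrder

lemma exists_isLeafOrder [Finite V] [Nonempty V] (hD : Monotone D)
    (hcard : ∀ n ≤ N, (D n).ncard = n)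
    (hconn : ∀ n, 2 ≤ n → n ≤ N → ((⊤ : G.Subgraph).induce (D n)).Connected) :
    ∃ u w, IsLeafOrder G N D u w := by
  have hstep : ∀ n, 1 ≤ n → n ≤ N → ∃ a, a ∉ D (n - 1) ∧ D n = insert a (D (n - 1)) := by
    intro n h1 hn
    obtain ⟨a, ha, hins⟩ := (Set.exists_eq_insert_iff_ncard).2
      ⟨hD (Nat.sub_le n 1), by rw [hcard n hn, hcard (n - 1) (by omega)]; omega⟩
    exact ⟨a, ha, hins.symm⟩
  choose! u hu hins using hstep
  have hattach : ∀ n, 2 ≤ n → n ≤ N → ∃ b, b ∈ D (n - 1) ∧ G.Adj (u n) b := by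
    intro n h2 hn
    have hne : (D (n - 1)).Nonempty := (Set.ncard_pos).1 (by rw [hcard (n - 1) (by omega)]; omega)
    obtain ⟨b, hb, hadj⟩ := (hconn n h2 hn).exists_adj_of_verts_eq_insert
      (hins n (by omega) hn) (hu n (by omega) hn) hne
    exact ⟨b, hb, hadj.adj_sub⟩
  choose! w hw hadj using hattach
  have hzero : D 0 = ∅ := (Set.ncard_eq_zero).1 (hcard 0 (Nat.zero_le N))
  exact ⟨u, w, hzero, hu, hins, hw, hadj⟩

theorem exists_treeChain [Finite V] (hD : Monotone D) (hcard : ∀ n ≤ N, (D n).ncard = n)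
    (hconn : ∀ n, 2 ≤ n → n ≤ N → ((⊤ : G.Subgraph).induce (D n)).Connected) :
    ∃ H : ℕ → G.Subgraph,
      H 0 = ⊥ ∧
      (∀ n, 1 ≤ n → n ≤ N → (H n).coe.IsTree) ∧
      (∀ n, 1 ≤ n → n ≤ N → H (n - 1) ≤ H n) ∧
      (∀ n, 1 ≤ n → n ≤ N →
        ∃ u, u ∉ (H (n - 1)).verts ∧ (H n).verts = insert u (H (n - 1)).verts) ∧
      (∀ n, 2 ≤ n → n ≤ N →
        ∃ u w, w ∈ (H (n - 1)).verts ∧ u ∉ (H (n - 1)).verts ∧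
          (H n).edgeSet = insert s(u, w) (H (n - 1)).edgeSet) ∧
      (∀ n ≤ N, (H n).verts = D n) := by
  rcases N.eq_zero_or_pos with rfl | hN
  · refine ⟨fun _ => ⊥, rfl, by omega, by omega, by omega, by omega, fun n hn => ?_⟩
    rw [Nat.le_zero.1 hn, (Set.ncard_eq_zero).1 (hcard 0 le_rfl)]
    rfl
  obtain ⟨v, -⟩ := (Set.ncard_pos).1 (hcard 1 hN ▸ Nat.one_pos)
  have : Nonempty V := ⟨v⟩
  obtain ⟨u, w, h⟩ := exists_isLeafOrder hD hcard hconn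
  have hverts (n : ℕ) (hn : n ≤ N) := h.verts_leafChain (n - 1) (by omega)
  refine ⟨leafChain G u w, rfl, fun n h1 hn => h.isTree_leafChain h1 hn,
    fun n _ _ => leafChain_sub_one_le n, fun n h1 hn => ⟨u n, ?_, ?_⟩,
    fun n h2 hn => ⟨u n, w n, ?_, ?_, h.edgeSet_leafChain h2 hn⟩, h.verts_leafChain⟩
  · rw [hverts n hn]; exact h.notMem n h1 hn
  · rw [hverts n hn, h.verts_leafChain n hn]; exact h.eq_insert n h1 hn
  · rw [hverts n hn]; exact h.mem n h2 hn
  · rw [hverts n hn]; exact h.notMem n (by omega) hn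

end SimpleGraph

theorem exists_monotone_hittingTime {f : ℕ → ℕ} (h0 : f 0 = 0) (hstep : ∀ t, f (t + 1) ≤ f t + 1)
    (T : ℕ) : ∃ τ : ℕ → ℕ, Monotone τ ∧ ∀ n ≤ f T, f (τ n) = n := by
  -- `τ n` is the first time `f` reaches `n`; as `f` climbs by at most one per step, it hits `n`.
  have hex (n : ℕ) : ∃ t, min n (f T) ≤ f t := ⟨T, min_le_right _ _⟩
  refine ⟨fun n => Nat.find (hex n),
    fun m n hmn => Nat.find_mono fun t ht => (min_le_min_right _ hmn).trans ht, fun n hn => ?_⟩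
  have hreach := Nat.find_spec (hex n)
  have hbefore := fun k => Nat.find_min (hex n) (m := k)
  show f (Nat.find (hex n)) = n
  generalize Nat.find (hex n) = t at hreach hbefore ⊢
  rw [min_eq_left hn] at hreach hbefore
  rcases t with _ | k
  · rw [h0] at hreach ⊢
    omega
  · have := hstep k
    have := hbefore k k.lt_succ_self
    omega

section NodeSearch

variable {G : SimpleGraph V} {S : ℕ → GMove V}

lemma occ_succ_le_of_target_ne {t : ℕ} {x : V} (h : (S t).target ≠ some x) :
    occ S (t + 1) x ≤ occ S t x := by
  rcases hS : S t with v | v | ⟨u, v⟩ <;> simp only [occ, hS, GMove.target] at h ⊢ <;>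
    split_ifs <;> simp_all

lemma occ_eq_zero_of_mem_ndirty : ∀ {t : ℕ} {x : V}, x ∈ ndirty G S t → occ S t x = 0
  | 0, _, _ => rfl
  | _ + 1, x, ⟨_, _, p, hp⟩ => hp x p.start_mem_support

lemma mem_ndirty_succ {t : ℕ} {x : V} (hx : x ∈ ndirty G S t) (h0 : occ S (t + 1) x = 0) :
    x ∈ ndirty G S (t + 1) :=
  ⟨x, hx, Walk.nil, by simpa using h0⟩

lemma target_eq_some_of_mem_ndirty_of_notMem_succ {t : ℕ} {x : V} (hx : x ∈ ndirty G S t)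
    (hx' : x ∉ ndirty G S (t + 1)) : (S t).target = some x := by
  by_contra h
  exact hx' (mem_ndirty_succ hx
    (Nat.le_zero.1 ((occ_succ_le_of_target_ne h).trans (occ_eq_zero_of_mem_ndirty hx).le)))

lemma ncard_compl_ndirty_succ_le [Finite V] (t : ℕ) :
    ((ndirty G S (t + 1))ᶜ).ncard ≤ ((ndirty G S t)ᶜ).ncard + 1 := by
  have hcleared : (ndirty G S t \ ndirty G S (t + 1)).ncard ≤ 1 :=
    (Set.ncard_le_one_iff).2 fun hx hy => Option.some.inj
      ((target_eq_some_of_mem_ndirty_of_notMem_succ hx.1 hx.2).symm.trans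
        (target_eq_some_of_mem_ndirty_of_notMem_succ hy.1 hy.2))
  calc ((ndirty G S (t + 1))ᶜ).ncard
      ≤ ((ndirty G S t)ᶜ ∪ (ndirty G S t \ ndirty G S (t + 1))).ncard :=
        Set.ncard_le_ncard fun x hx => by by_cases h : x ∈ ndirty G S t <;> simp_all
    _ ≤ ((ndirty G S t)ᶜ).ncard + 1 := (Set.ncard_union_le _ _).trans (by omega)

theorem exists_monotone_clearingTime [Fintype V] {T : ℕ} (hclear : ndirty G S T = ∅) :
    ∃ τ : ℕ → ℕ, Monotone τ ∧ ∀ n ≤ Fintype.card V, ((ndirty G S (τ n))ᶜ).ncard = n := by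
  have hT : ((ndirty G S T)ᶜ).ncard = Fintype.card V := by
    rw [hclear, Set.compl_empty, Set.ncard_univ, Nat.card_eq_fintype_card]
  simpa only [hT] using exists_monotone_hittingTime (f := fun t => ((ndirty G S t)ᶜ).ncard)
    (by simp [ndirty]) ncard_compl_ndirty_succ_le T

lemma nclearSubgraph_eq_induce (t : ℕ) :
    nclearSubgraph G S t = (⊤ : G.Subgraph).induce (ndirty G S t)ᶜ := by
  ext <;> simp [nclearSubgraph]
  exact and_rotate

end NodeSearch

theorem stmt8_general {V : Type*} [Fintype V] (G : SimpleGraph V) (S : ℕ → GMove V)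
    (hM : ∀ t : ℕ, ndirty G S (t + 1) ⊆ ndirty G S t)
    (hC : ∀ t : ℕ, 1 ≤ t → (nclearSubgraph G S t).Connected)
    (Tf : ℕ) (hclear : ndirty G S Tf = ∅) :
    ∃ (H : ℕ → G.Subgraph) (τ : ℕ → ℕ),
      H 0 = ⊥ ∧
      (∀ n, 1 ≤ n → n ≤ Fintype.card V → (H n).coe.IsTree) ∧
      (H (Fintype.card V)).verts = Set.univ ∧
      (∀ n, 1 ≤ n → n ≤ Fintype.card V → H (n - 1) ≤ H n) ∧
      (∀ n, 1 ≤ n → n ≤ Fintype.card V →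
        ∃ u, u ∉ (H (n - 1)).verts ∧ (H n).verts = insert u (H (n - 1)).verts) ∧
      (∀ n, 2 ≤ n → n ≤ Fintype.card V →
        ∃ u w, w ∈ (H (n - 1)).verts ∧ u ∉ (H (n - 1)).verts ∧
          (H n).edgeSet = insert s(u, w) (H (n - 1)).edgeSet) ∧
      (∀ m n, m ≤ n → n ≤ Fintype.card V → τ m ≤ τ n) ∧
      (∀ n ≤ Fintype.card V, (H n).verts = (ndirty G S (τ n))ᶜ) := by
  obtain ⟨τ, hτ, hcard⟩ := exists_monotone_clearingTime hclear
  have hpos (n : ℕ) (h1 : 1 ≤ n) (hn : n ≤ Fintype.card V) : 1 ≤ τ n := by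
    refine Nat.one_le_iff_ne_zero.2 fun hτ0 => ?_
    have := hcard n hn
    simp only [hτ0, ndirty, Set.compl_univ, Set.ncard_empty] at this
    omega
  obtain ⟨H, h0, htree, hle, hvert, hedge, hverts⟩ := SimpleGraph.exists_treeChain
    (fun m n hmn => Set.compl_subset_compl.2 (antitone_nat_of_succ_le hM (hτ hmn))) hcard
    fun n h2 hn => nclearSubgraph_eq_induce (τ n) ▸ hC (τ n) (hpos n (by omega) hn)
  refine ⟨H, τ, h0, htree, ?_, hle, hvert, hedge, fun m n hmn _ => hτ hmn, hverts⟩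
  rw [hverts _ le_rfl, Set.eq_univ_iff_ncard, hcard _ le_rfl, Nat.card_eq_fintype_card]

/-- Every rooted internal monotone connected node-clearing search of a graph `G`
with `N` nodes generates a nested sequence of trees `T₀ ⊆ T₁ ⊆ ⋯ ⊆ T_N`: `T₀` is
empty, `T_N` is a spanning tree of `G`, each `Tₙ` adds exactly one new node (the
`n`-th node cleared, so the vertex sets are the successive n-clear sets) and, for
`n ≥ 2`, exactly one edge joining the new node to a node of `T_{n-1}`. -/
theorem stmt8 {V : Type*} [Fintype V] (G : SimpleGraph V) (S : ℕ → GMove V)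
    (hL : Legal G S) (hI : Internal S) (r : V) (hR : RootedAt S r)
    (hM : ∀ t : ℕ, ndirty G S (t + 1) ⊆ ndirty G S t)
    (hC : ∀ t : ℕ, 1 ≤ t → (nclearSubgraph G S t).Connected)
    (Tf : ℕ) (hclear : ndirty G S Tf = ∅) :
    ∃ (H : ℕ → G.Subgraph) (τ : ℕ → ℕ),
      H 0 = ⊥ ∧
      (∀ n, 1 ≤ n → n ≤ Fintype.card V → (H n).coe.IsTree) ∧
      (H (Fintype.card V)).verts = Set.univ ∧
      (∀ n, 1 ≤ n → n ≤ Fintype.card V → H (n - 1) ≤ H n) ∧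
      (∀ n, 1 ≤ n → n ≤ Fintype.card V →
        ∃ u, u ∉ (H (n - 1)).verts ∧ (H n).verts = insert u (H (n - 1)).verts) ∧
      (∀ n, 2 ≤ n → n ≤ Fintype.card V →
        ∃ u w, w ∈ (H (n - 1)).verts ∧ u ∉ (H (n - 1)).verts ∧
          (H n).edgeSet = insert s(u, w) (H (n - 1)).edgeSet) ∧
      (∀ m n, m ≤ n → n ≤ Fintype.card V → τ m ≤ τ n) ∧
      (∀ n ≤ Fintype.card V, (H n).verts = (ndirty G S (τ n))ᶜ) :=
  stmt8_general G S hM hC Tf hclear
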